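/- Under the monad axioms for (E, d, s) over A, the triple (E={monoid}, G=List A with concatenation; ⊗⁺ = d⁺, ⊙⁺) forms a matched pair of monoids satisfying both bicrossed equations and the unit conditions, and hence the bicrossed product E ⋈ A* exists as a monoid on E × List A with multiplication (x, as) • (y, bs) = (x · d⁺(as, y), (as ⊙⁺ y) ++ bs). -/

import Mathlib

/-- Canonical extension of `d : A → E → E` to lists. -/
def dPlus {A E : Type*} (d : A → E → E) : List A → E → E
  | [], e => e
  | a :: as, e => d a (dPlus d as e)

/-- Canonical extension of `s` to a map `List A × E → List A`. -/
def odPlus {A E : Type*} (d : A → E → E) (s : A → E → A) : List A → E → List A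
  | [], _ => []
  | a :: as, e => s a (dPlus d as e) :: odPlus d s as e

/-- The semifree bicrossed product multiplication on `E × List A`. -/
def sfMul {A E : Type*} [Monoid E] (d : A → E → E) (s : A → E → A)
    (p q : E × List A) : E × List A :=
  (p.1 * dPlus d p.2 q.1, odPlus d s p.2 q.1 ++ q.2)

/-!
Everything is proved by induction on the list, one letter at a time: for a single letter the
two bicrossed equations and the action laws are exactly the monad axioms for `d` and `s`, and
`dPlus`, `odPlus` simply iterate them. Associativity of `sfMul` then reduces to the two action
laws and the two bicrossed equations, as for any matched pair of monoids.
-/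

section Lists

variable {A E : Type*} (d : A → E → E) (s : A → E → A)

theorem dPlus_append : ∀ (as bs : List A) (e : E),
    dPlus d (as ++ bs) e = dPlus d as (dPlus d bs e)
  | [], _, _ => rfl
  | a :: as, bs, e => by rw [List.cons_append, dPlus, dPlus, dPlus_append as bs e]

theorem odPlus_append : ∀ (as bs : List A) (e : E),
    odPlus d s (as ++ bs) e = odPlus d s as (dPlus d bs e) ++ odPlus d s bs e
  | [], _, _ => rfl
  | a :: as, bs, e => by
    rw [List.cons_append, odPlus, odPlus, odPlus_append as bs e, dPlus_append, List.cons_append]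

end Lists

section Monoid

variable {A E : Type*} [Monoid E] {d : A → E → E} {s : A → E → A}

theorem dPlus_one (hd1 : ∀ a : A, d a 1 = 1) : ∀ as : List A, dPlus d as 1 = 1
  | [] => rfl
  | a :: as => by rw [dPlus, dPlus_one hd1 as, hd1]

theorem odPlus_one (hs1 : ∀ a : A, s a 1 = a) (hd1 : ∀ a : A, d a 1 = 1) :
    ∀ as : List A, odPlus d s as 1 = as
  | [] => rfl
  | a :: as => by rw [odPlus, dPlus_one hd1 as, hs1, odPlus_one hs1 hd1 as]

theorem dPlus_mul (hd2 : ∀ (a : A) (e e' : E), d a (e * e') = d a e * d (s a e) e') :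
    ∀ (as : List A) (e e' : E),
      dPlus d as (e * e') = dPlus d as e * dPlus d (odPlus d s as e) e'
  | [], _, _ => rfl
  | a :: as, e, e' => by rw [dPlus, dPlus_mul hd2 as e e', hd2, odPlus, dPlus, dPlus]

theorem odPlus_mul (hs2 : ∀ (a : A) (e e' : E), s a (e * e') = s (s a e) e')
    (hd2 : ∀ (a : A) (e e' : E), d a (e * e') = d a e * d (s a e) e') :
    ∀ (as : List A) (e e' : E),
      odPlus d s as (e * e') = odPlus d s (odPlus d s as e) e'
  | [], _, _ => rfl
  | a :: as, e, e' => by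
    rw [odPlus, odPlus_mul hs2 hd2 as e e', dPlus_mul hd2 as e e', hs2, odPlus, odPlus]

theorem sfMul_assoc (hs2 : ∀ (a : A) (e e' : E), s a (e * e') = s (s a e) e')
    (hd2 : ∀ (a : A) (e e' : E), d a (e * e') = d a e * d (s a e) e')
    (p q r : E × List A) : sfMul d s (sfMul d s p q) r = sfMul d s p (sfMul d s q r) := by
  simp only [sfMul, dPlus_append, odPlus_append, dPlus_mul hd2, odPlus_mul hs2 hd2, mul_assoc,
    List.append_assoc]

theorem one_sfMul (p : E × List A) : sfMul d s (1, []) p = p := by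
  simp only [sfMul, dPlus, odPlus, one_mul, List.nil_append]

theorem sfMul_one (hs1 : ∀ a : A, s a 1 = a) (hd1 : ∀ a : A, d a 1 = 1) (p : E × List A) :
    sfMul d s p (1, []) = p := by
  simp only [sfMul, dPlus_one hd1, odPlus_one hs1 hd1, mul_one, List.append_nil]

end Monoid

theorem monad_gives_matched_pair_and_bicrossed_product {A E : Type*} [Monoid E]
    (d : A → E → E) (s : A → E → A)
    (hs1 : ∀ a : A, s a 1 = a)
    (hd1 : ∀ a : A, d a 1 = 1)
    (hs2 : ∀ (a : A) (e e' : E), s a (e * e') = s (s a e) e')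
    (hd2 : ∀ (a : A) (e e' : E), d a (e * e') = d a e * d (s a e) e') :
    -- dPlus is a left action of the free monoid List A on E
    (∀ e : E, dPlus d [] e = e) ∧
    (∀ (as bs : List A) (e : E), dPlus d (as ++ bs) e = dPlus d as (dPlus d bs e)) ∧
    -- odPlus is a right action of E on List A
    (∀ as : List A, odPlus d s as 1 = as) ∧
    (∀ (as : List A) (e e' : E),
      odPlus d s as (e * e') = odPlus d s (odPlus d s as e) e') ∧
    -- unit conditions
    (∀ as : List A, dPlus d as 1 = 1) ∧
    (∀ e : E, odPlus d s [] e = []) ∧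
    -- the two bicrossed equations
    (∀ (as : List A) (e e' : E),
      dPlus d as (e * e') = dPlus d as e * dPlus d (odPlus d s as e) e') ∧
    (∀ (as bs : List A) (e : E),
      odPlus d s (as ++ bs) e = odPlus d s as (dPlus d bs e) ++ odPlus d s bs e) ∧
    -- hence E ⋈ A* is a monoid
    (∀ p q r : E × List A,
      sfMul d s (sfMul d s p q) r = sfMul d s p (sfMul d s q r)) ∧
    (∀ p : E × List A, sfMul d s ((1 : E), ([] : List A)) p = p) ∧
    (∀ p : E × List A, sfMul d s p ((1 : E), ([] : List A)) = p) :=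
  ⟨fun _ => rfl, dPlus_append d, odPlus_one hs1 hd1, odPlus_mul hs2 hd2, dPlus_one hd1,
    fun _ => rfl, dPlus_mul hd2, odPlus_append d s, sfMul_assoc hs2 hd2, one_sfMul,
    sfMul_one hs1 hd1⟩
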